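/- Adopt the FAVOR+S binding setup: fix integers D, M, N ≥ 1, a fixed channel (u, n) ∈ {1,…,M}×{1,…,N} and positions i, j; for each channel pair (m, w) ∈ {1,…,M}×{1,…,N} let k̄_j^{(m,w)} ∈ ℝ^D and q̄_i^{(m,w)} ∈ ℝ^D be fixed vectors and let a^{(m,w)} ∈ {−1,+1}^D be mutually independent random vectors with i.i.d. Rademacher entries; define k_j^{(m,w)} = k̄_j^{(m,w)} ⊙ a^{(m,w)} and q_i^{(m,w)} = q̄_i^{(m,w)} ⊙ a^{(m,w)}. Then the second moment of the total inter-channel interference satisfies exactly 𝔼[ ( Σ_{(w,t) ∈ {1,…,N}×{1,…,M}, (u,w) ≠ (t,n)} ⟨k_j^{(u,w)}, q_i^{(t,n)}⟩ )² ] = Σ_{(w,t) ∈ {1,…,N}×{1,…,M}, (u,w) ≠ (t,n)} Σ_{p=1}^D (k̄_j^{(u,w)})_p² · (q̄_i^{(t,n)})_p², i.e., all cross-terms vanish. -/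

import Mathlib

open MeasureTheory ProbabilityTheory
open scoped ENNReal NNReal

/-- The Rademacher distribution on `ℝ`: uniform on `{-1, +1}`. -/
noncomputable def rademacherMeasure : Measure ℝ :=
  (2 : ℝ≥0∞)⁻¹ • Measure.dirac (1 : ℝ) + (2 : ℝ≥0∞)⁻¹ • Measure.dirac (-1 : ℝ)

lemma rademacher_integral_id : ∫ x : ℝ, x ∂rademacherMeasure = 0 := by
  have h1 : Integrable (id : ℝ → ℝ) ((2 : ℝ≥0∞)⁻¹ • Measure.dirac (1:ℝ)) := by
    refine Integrable.smul_measure ?_ (by norm_num)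
    refine (integrable_const (1:ℝ)).congr ?_
    rw [Filter.eventuallyEq_iff_exists_mem]
    exact ⟨{1}, by simp [MeasureTheory.ae_dirac_eq], fun x hx => by simpa using hx.symm⟩
  have h2 : Integrable (id : ℝ → ℝ) ((2 : ℝ≥0∞)⁻¹ • Measure.dirac (-1:ℝ)) := by
    refine Integrable.smul_measure ?_ (by norm_num)
    refine (integrable_const (-1:ℝ)).congr ?_
    rw [Filter.eventuallyEq_iff_exists_mem]
    exact ⟨{-1}, by simp [MeasureTheory.ae_dirac_eq], fun x hx => by simpa using hx.symm⟩
  rw [rademacherMeasure]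
  rw [show (∫ x : ℝ, x ∂((2 : ℝ≥0∞)⁻¹ • Measure.dirac (1:ℝ) + (2 : ℝ≥0∞)⁻¹ • Measure.dirac (-1:ℝ)))
      = ∫ x : ℝ, id x ∂((2 : ℝ≥0∞)⁻¹ • Measure.dirac (1:ℝ) + (2 : ℝ≥0∞)⁻¹ • Measure.dirac (-1:ℝ)) from rfl]
  rw [integral_add_measure h1 h2, integral_smul_measure, integral_smul_measure,
    integral_dirac, integral_dirac]
  norm_num

section Aux
variable {Ω : Type*} [MeasurableSpace Ω] {μ : Measure Ω} [IsProbabilityMeasure μ]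
variable {ι : Type*} {f : ι → Ω → ℝ}

lemma pm_integrable {F : Ω → ℝ} (hm : Measurable F) (hb : ∀ ω, F ω = 1 ∨ F ω = -1) :
    Integrable F μ := by
  refine (integrable_const (1:ℝ)).mono' hm.aestronglyMeasurable ?_
  filter_upwards with ω
  rcases hb ω with h | h <;> rw [h] <;> norm_num

lemma pm_mean_zero {F : Ω → ℝ} (hm : Measurable F)
    (hdist : Measure.map F μ = rademacherMeasure) : ∫ ω, F ω ∂μ = 0 := by
  have : ∫ ω, F ω ∂μ = ∫ x, id x ∂(Measure.map F μ) :=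
    (integral_map hm.aemeasurable aestronglyMeasurable_id).symm
  rw [this, hdist]
  exact rademacher_integral_id

variable (hval : ∀ i ω, f i ω = 1 ∨ f i ω = -1) (hmeas : ∀ i, Measurable (f i))
  (hmean : ∀ i, ∫ ω, f i ω ∂μ = 0)
  (hindep : iIndepFun f μ)

include hval hmeas hmean hindep

lemma pm_pair_zero {i j : ι} (hij : i ≠ j) : ∫ ω, f i ω * f j ω ∂μ = 0 := by
  have h := (hindep.indepFun hij).integral_mul_eq_mul_integral
    (pm_integrable (hmeas i) (hval i)).aestronglyMeasurable
    (pm_integrable (hmeas j) (hval j)).aestronglyMeasurable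
  have h2 : ∫ ω, f i ω * f j ω ∂μ = ∫ ω, (f i * f j) ω ∂μ := rfl
  rw [h2, h, hmean i, hmean j, zero_mul]

lemma pm_four_zero [DecidableEq ι] {α β γ δ : ι} (hαβ : α ≠ β) (hγδ : γ ≠ δ)
    (h1 : ¬(α = γ ∧ β = δ)) (h2 : ¬(α = δ ∧ β = γ)) :
    ∫ ω, f α ω * f β ω * (f γ ω * f δ ω) ∂μ = 0 := by
  have hsq : ∀ i ω, f i ω * f i ω = 1 := fun i ω => by
    rcases hval i ω with h | h <;> rw [h] <;> norm_num
  by_cases hag : α = γ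
  · have hbd : β ≠ δ := fun h => h1 ⟨hag, h⟩
    subst hag
    have key : ∀ ω, f α ω * f β ω * (f α ω * f δ ω) = f β ω * f δ ω := fun ω => by
      rw [show f α ω * f β ω * (f α ω * f δ ω) = (f α ω * f α ω) * (f β ω * f δ ω) by ring,
        hsq, one_mul]
    simp_rw [key]
    exact pm_pair_zero hval hmeas hmean hindep hbd
  by_cases had : α = δ
  · have hbg : β ≠ γ := fun h => h2 ⟨had, h⟩
    subst had
    have key : ∀ ω, f α ω * f β ω * (f γ ω * f α ω) = f β ω * f γ ω := fun ω => by
      rw [show f α ω * f β ω * (f γ ω * f α ω) = (f α ω * f α ω) * (f β ω * f γ ω) by ring,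
        hsq, one_mul]
    simp_rw [key]
    exact pm_pair_zero hval hmeas hmean hindep hbg
  by_cases hbg : β = γ
  · subst hbg
    have key : ∀ ω, f α ω * f β ω * (f β ω * f δ ω) = f α ω * f δ ω := fun ω => by
      rw [show f α ω * f β ω * (f β ω * f δ ω) = (f β ω * f β ω) * (f α ω * f δ ω) by ring,
        hsq, one_mul]
    simp_rw [key]
    exact pm_pair_zero hval hmeas hmean hindep had
  by_cases hbd : β = δ
  · subst hbd
    have key : ∀ ω, f α ω * f β ω * (f γ ω * f β ω) = f α ω * f γ ω := fun ω => by
      rw [show f α ω * f β ω * (f γ ω * f β ω) = (f β ω * f β ω) * (f α ω * f γ ω) by ring,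
        hsq, one_mul]
    simp_rw [key]
    exact pm_pair_zero hval hmeas hmean hindep hag
  -- all distinct
  · have hδs : δ ∉ ({α, β, γ} : Finset ι) := by
      simp only [Finset.mem_insert, Finset.mem_singleton, not_or]
      exact ⟨fun h => had h.symm, fun h => hbd h.symm, fun h => hγδ h.symm⟩
    have hprod : (∏ j ∈ ({α, β, γ} : Finset ι), f j) = fun ω => f α ω * f β ω * f γ ω := by
      funext ω
      rw [Finset.prod_apply]
      rw [Finset.prod_insert (by simp [hαβ, hag]), Finset.prod_insert (by simp [hbg]),
        Finset.prod_singleton]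
      ring
    have hInd : IndepFun (∏ j ∈ ({α, β, γ} : Finset ι), f j) (f δ) μ :=
      hindep.indepFun_finset_prod_of_notMem hmeas hδs
    rw [hprod] at hInd
    have hintP : Integrable (fun ω => f α ω * f β ω * f γ ω) μ := by
      refine pm_integrable (((hmeas α).mul (hmeas β)).mul (hmeas γ)) (fun ω => ?_)
      rcases hval α ω with h | h <;> rcases hval β ω with h' | h' <;>
        rcases hval γ ω with h'' | h'' <;> rw [h, h', h''] <;> norm_num
    have h := hInd.integral_mul_eq_mul_integral hintP.aestronglyMeasurable
      (pm_integrable (hmeas δ) (hval δ)).aestronglyMeasurable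
    have h2 : ∫ ω, f α ω * f β ω * (f γ ω * f δ ω) ∂μ
        = ∫ ω, ((fun ω => f α ω * f β ω * f γ ω) * f δ) ω ∂μ := by
      congr 1; funext ω; simp [Pi.mul_apply]; ring
    rw [h2, h, hmean δ, mul_zero]

end Aux

/-- **Second moment of the total inter-channel interference in FAVOR+S.**
All cross-terms vanish:
`𝔼[(∑_{(w,t), (u,w)≠(t,n)} ⟨k_j^{(u,w)}, q_i^{(t,n)}⟩)²]
  = ∑_{(w,t), (u,w)≠(t,n)} ∑_{p=1}^D (k̄_j^{(u,w)})_p²·(q̄_i^{(t,n)})_p²`. -/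
theorem stmt_12 {Ω : Type*} [MeasurableSpace Ω] (μ : Measure Ω) [IsProbabilityMeasure μ]
    (D M N : ℕ) (hD : 1 ≤ D) (hM : 1 ≤ M) (hN : 1 ≤ N)
    (u : Fin M) (n : Fin N)
    (kbar qbar : Fin M × Fin N → Fin D → ℝ)
    (a : Fin M × Fin N → Ω → Fin D → ℝ)
    (haval : ∀ c ω d, a c ω d = 1 ∨ a c ω d = -1)
    (hameas : ∀ c d, Measurable fun ω => a c ω d)
    (hindep : iIndepFun
      (fun (p : (Fin M × Fin N) × Fin D) ω => a p.1 ω p.2) μ)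
    (hadist : ∀ c d, Measure.map (fun ω => a c ω d) μ = rademacherMeasure) :
    ∫ ω, (∑ p ∈ (Finset.univ : Finset (Fin N × Fin M)).filter
            (fun p => ((u, p.1) : Fin M × Fin N) ≠ (p.2, n)),
          ∑ d, (kbar (u, p.1) d * a (u, p.1) ω d) * (qbar (p.2, n) d * a (p.2, n) ω d)) ^ 2 ∂μ
      = ∑ p ∈ (Finset.univ : Finset (Fin N × Fin M)).filter
            (fun p => ((u, p.1) : Fin M × Fin N) ≠ (p.2, n)),
          ∑ d, (kbar (u, p.1) d) ^ 2 * (qbar (p.2, n) d) ^ 2 := by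
  classical
  set f : (Fin M × Fin N) × Fin D → Ω → ℝ := fun i ω => a i.1 ω i.2 with hf
  have hval : ∀ i ω, f i ω = 1 ∨ f i ω = -1 := fun i ω => haval i.1 ω i.2
  have hmeas : ∀ i, Measurable (f i) := fun i => hameas i.1 i.2
  have hmean : ∀ i, ∫ ω, f i ω ∂μ = 0 := fun i => pm_mean_zero (hmeas i) (hadist i.1 i.2)
  set S : Finset (Fin N × Fin M) := (Finset.univ : Finset (Fin N × Fin M)).filter
      (fun p => ((u, p.1) : Fin M × Fin N) ≠ (p.2, n)) with hS
  set T : Finset ((Fin N × Fin M) × Fin D) := S ×ˢ (Finset.univ : Finset (Fin D)) with hT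
  set c : (Fin N × Fin M) × Fin D → ℝ :=
    fun x => kbar (u, x.1.1) x.2 * qbar (x.1.2, n) x.2 with hc
  set G : (Fin N × Fin M) × Fin D → Ω → ℝ :=
    fun x ω => f ((u, x.1.1), x.2) ω * f ((x.1.2, n), x.2) ω with hG
  set F : (Fin N × Fin M) × Fin D → Ω → ℝ := fun x ω => c x * G x ω with hF
  -- integrability of products
  have hGval : ∀ x y ω, G x ω * G y ω = 1 ∨ G x ω * G y ω = -1 := by
    intro x y ω
    rcases hval ((u, x.1.1), x.2) ω with h1 | h1 <;>
      rcases hval ((x.1.2, n), x.2) ω with h2 | h2 <;>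
      rcases hval ((u, y.1.1), y.2) ω with h3 | h3 <;>
      rcases hval ((y.1.2, n), y.2) ω with h4 | h4 <;>
      simp [hG, h1, h2, h3, h4]
  have hGmeas : ∀ x, Measurable (G x) :=
    fun x => (hmeas ((u, x.1.1), x.2)).mul (hmeas ((x.1.2, n), x.2))
  have hint : ∀ x y, Integrable (fun ω => F x ω * F y ω) μ := by
    intro x y
    have : (fun ω => F x ω * F y ω) = fun ω => (c x * c y) * (G x ω * G y ω) := by
      funext ω; simp only [hF]; ring
    rw [this]
    exact (pm_integrable ((hGmeas x).mul (hGmeas y)) (hGval x y)).const_mul _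
  -- key computation
  have key : ∀ x ∈ T, ∀ y ∈ T, ∫ ω, F x ω * F y ω ∂μ
      = if x = y then kbar (u, x.1.1) x.2 ^ 2 * qbar (x.1.2, n) x.2 ^ 2 else 0 := by
    intro x hx y hy
    by_cases hxy : x = y
    · subst hxy
      simp only [if_pos rfl]
      have : (fun ω => F x ω * F x ω)
          = fun _ => kbar (u, x.1.1) x.2 ^ 2 * qbar (x.1.2, n) x.2 ^ 2 := by
        funext ω
        rcases hval ((u, x.1.1), x.2) ω with h1 | h1 <;>
          rcases hval ((x.1.2, n), x.2) ω with h2 | h2 <;>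
          simp only [hF, hG, hc, h1, h2] <;> ring
      rw [this, integral_const]
      simp
    · rw [if_neg hxy]
      have hxS : ((u, x.1.1) : Fin M × Fin N) ≠ (x.1.2, n) := by
        have := (Finset.mem_product.mp hx).1
        rw [hS, Finset.mem_filter] at this
        exact this.2
      have hyS : ((u, y.1.1) : Fin M × Fin N) ≠ (y.1.2, n) := by
        have := (Finset.mem_product.mp hy).1
        rw [hS, Finset.mem_filter] at this
        exact this.2
      have hrw : (fun ω => F x ω * F y ω) = fun ω => (c x * c y) *
          (f ((u, x.1.1), x.2) ω * f ((x.1.2, n), x.2) ω *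
            (f ((u, y.1.1), y.2) ω * f ((y.1.2, n), y.2) ω)) := by
        funext ω; simp only [hF, hG]; ring
      calc ∫ ω, F x ω * F y ω ∂μ
          = (c x * c y) * ∫ ω, f ((u, x.1.1), x.2) ω * f ((x.1.2, n), x.2) ω *
              (f ((u, y.1.1), y.2) ω * f ((y.1.2, n), y.2) ω) ∂μ := by
            rw [hrw]; exact integral_const_mul _ _
        _ = 0 := by
            rw [pm_four_zero hval hmeas hmean hindep ?_ ?_ ?_ ?_, mul_zero]
            · -- α ≠ β
              intro h
              exact hxS (congrArg Prod.fst h)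
            · intro h
              exact hyS (congrArg Prod.fst h)
            · -- ¬(α = γ ∧ β = δ)
              rintro ⟨h1, h2⟩
              apply hxy
              have e1 : x.1.1 = y.1.1 := by
                have := congrArg Prod.fst h1; simpa using congrArg Prod.snd this
              have e2 : x.1.2 = y.1.2 := by
                have := congrArg Prod.fst h2; simpa using congrArg Prod.fst this
              have e3 : x.2 = y.2 := by have := congrArg Prod.snd h1; simpa using this
              exact Prod.ext (Prod.ext e1 e2) e3
            · -- ¬(α = δ ∧ β = γ)
              rintro ⟨h1, h2⟩
              apply hxS
              have e1 : x.1.1 = n := by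
                have := congrArg Prod.fst h1; simpa using congrArg Prod.snd this
              have e2 : x.1.2 = u := by
                have := congrArg Prod.fst h2; simpa using congrArg Prod.fst this
              rw [e1, e2]
  -- assemble
  have hrw1 : ∀ ω, (∑ p ∈ S, ∑ d,
        (kbar (u, p.1) d * a (u, p.1) ω d) * (qbar (p.2, n) d * a (p.2, n) ω d)) ^ 2
      = ∑ x ∈ T, ∑ y ∈ T, F x ω * F y ω := by
    intro ω
    have h1 : (∑ p ∈ S, ∑ d,
        (kbar (u, p.1) d * a (u, p.1) ω d) * (qbar (p.2, n) d * a (p.2, n) ω d))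
        = ∑ x ∈ T, F x ω := by
      rw [hT, Finset.sum_product]
      refine Finset.sum_congr rfl fun p _ => Finset.sum_congr rfl fun d _ => ?_
      simp only [hF, hG, hc, hf]
      ring
    rw [h1, sq, Finset.sum_mul_sum]
  calc ∫ ω, (∑ p ∈ S, ∑ d,
        (kbar (u, p.1) d * a (u, p.1) ω d) * (qbar (p.2, n) d * a (p.2, n) ω d)) ^ 2 ∂μ
      = ∫ ω, ∑ x ∈ T, ∑ y ∈ T, F x ω * F y ω ∂μ := by
        refine integral_congr_ae (Filter.Eventually.of_forall fun ω => ?_)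
        exact hrw1 ω
    _ = ∑ x ∈ T, ∑ y ∈ T, ∫ ω, F x ω * F y ω ∂μ := by
        rw [integral_finset_sum _ (fun x _ => integrable_finset_sum _ (fun y _ => hint x y))]
        exact Finset.sum_congr rfl fun x _ => integral_finset_sum _ (fun y _ => hint x y)
    _ = ∑ x ∈ T, kbar (u, x.1.1) x.2 ^ 2 * qbar (x.1.2, n) x.2 ^ 2 := by
        refine Finset.sum_congr rfl fun x hx => ?_
        rw [Finset.sum_congr rfl (fun y hy => key x hx y hy)]
        rw [Finset.sum_ite_eq T x (fun _ => kbar (u, x.1.1) x.2 ^ 2 * qbar (x.1.2, n) x.2 ^ 2),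
          if_pos hx]
    _ = ∑ p ∈ S, ∑ d, (kbar (u, p.1) d) ^ 2 * (qbar (p.2, n) d) ^ 2 := by
        rw [hT, Finset.sum_product]
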